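/- arXiv:1804.07978 — 3 statements merged into one kernel-verified Lean document; each statement's English description precedes it below -/
import Mathlib

section
/- Let (ε_k)_{k≥1} be an i.i.d. sequence of real random variables and let α, β ≥ 0 be constants such that log(α ε_1² + β) is integrable with E[log(α ε_1² + β)] < 0. Then the product ∏_{k=1}^n (α ε_k² + β) converges to 0 almost surely as n → ∞. Consequently, if σ² and ν² are two sequences of random variables driven by the same innovations via σ²_{n+1} = ω + σ²_n(α ε_n² + β) and ν²_{n+1} = ω + ν²_n(α ε_n² + β) (with ω real and arbitrary starting values σ²_1, ν²_1), then |σ²_{n+1} − ν²_{n+1}| = |σ²_1 − ν²_1|·∏_{k=1}^n (α ε_k² + β) → 0 almost surely. -/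
/-!
Taking logarithms turns the product `∏_{k ≤ n} (α ε_k² + β)` into a sum of i.i.d. integrable
variables with negative mean, which tends to `-∞` almost surely by the strong law of large
numbers; the product is then squeezed between `0` and the exponential of that sum, a bound that
survives vanishing factors because `x ≤ exp (log x)` also holds at `x = 0`. Subtracting
the two recursions cancels `ω`, so the difference of the volatilities is multiplied by
`α ε_n² + β` at each step.
-/

open MeasureTheory ProbabilityTheory Filter Finset Topology

theorem prod_Icc_one_eq_prod_range {M : Type*} [CommMonoid M] (f : ℕ → M) (n : ℕ) :
    ∏ k ∈ Icc 1 n, f k = ∏ i ∈ range n, f (i + 1) := by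
  rw [← Ico_add_one_right_eq_Icc, prod_Ico_eq_prod_range]
  simp [add_comm]

theorem prod_le_exp_sum_log {ι : Type*} (s : Finset ι) {a : ι → ℝ}
    (ha : ∀ i ∈ s, 0 ≤ a i) :
    ∏ i ∈ s, a i ≤ Real.exp (∑ i ∈ s, Real.log (a i)) := by
  rw [Real.exp_sum]
  exact prod_le_prod ha fun i _ => Real.le_exp_log (a i)

theorem tendsto_prod_range_zero_of_tendsto_sum_log_atBot {a : ℕ → ℝ} (ha : ∀ i, 0 ≤ a i)
    (h : Tendsto (fun n => ∑ i ∈ range n, Real.log (a i)) atTop atBot) :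
    Tendsto (fun n => ∏ i ∈ range n, a i) atTop (𝓝 0) :=
  tendsto_of_tendsto_of_tendsto_of_le_of_le tendsto_const_nhds (Real.tendsto_exp_atBot.comp h)
    (fun _ => prod_nonneg fun i _ => ha i) (fun _ => prod_le_exp_sum_log _ fun i _ => ha i)

theorem tendsto_atBot_of_tendsto_div_natCast_neg {u : ℕ → ℝ} {m : ℝ} (hm : m < 0)
    (h : Tendsto (fun n => u n / n) atTop (𝓝 m)) : Tendsto u atTop atBot := by
  refine (tendsto_natCast_atTop_atTop.atTop_mul_neg hm h).congr' ?_
  filter_upwards [eventually_ne_atTop 0] with n hn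
  field_simp

section StrongLaw

variable {Ω : Type*} [MeasurableSpace Ω] {μ : Measure Ω}

theorem ae_tendsto_sum_range_atBot_of_integral_neg (X : ℕ → Ω → ℝ)
    (hint : Integrable (X 0) μ) (hindep : Pairwise fun i j => X i ⟂ᵢ[μ] X j)
    (hident : ∀ i, IdentDistrib (X i) (X 0) μ μ) (hneg : μ[X 0] < 0) :
    ∀ᵐ ω ∂μ, Tendsto (fun n => ∑ i ∈ range n, X i ω) atTop atBot := by
  filter_upwards [strong_law_ae_real X hint hindep hident] with ω hω
  exact tendsto_atBot_of_tendsto_div_natCast_neg hneg hω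

theorem ae_tendsto_prod_range_zero_of_integral_log_neg (Y : ℕ → Ω → ℝ)
    (hY : ∀ i ω, 0 ≤ Y i ω) (hindep : Pairwise fun i j => Y i ⟂ᵢ[μ] Y j)
    (hident : ∀ i, IdentDistrib (Y i) (Y 0) μ μ)
    (hint : Integrable (fun ω => Real.log (Y 0 ω)) μ)
    (hneg : ∫ ω, Real.log (Y 0 ω) ∂μ < 0) :
    ∀ᵐ ω ∂μ, Tendsto (fun n => ∏ i ∈ range n, Y i ω) atTop (𝓝 0) := by
  have hlog := ae_tendsto_sum_range_atBot_of_integral_neg (fun i ω => Real.log (Y i ω)) hint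
    (fun i j hij => (hindep hij).comp Real.measurable_log Real.measurable_log)
    (fun i => (hident i).comp Real.measurable_log) hneg
  filter_upwards [hlog] with ω hω
  exact tendsto_prod_range_zero_of_tendsto_sum_log_atBot (hY · ω) hω

end StrongLaw

theorem sub_eq_mul_prod_of_affine_recurrence {R : Type*} [CommRing R] {c : R} {a u v : ℕ → R}
    (hu : ∀ n, 1 ≤ n → u (n + 1) = c + u n * a n)
    (hv : ∀ n, 1 ≤ n → v (n + 1) = c + v n * a n) (n : ℕ) :
    u (n + 1) - v (n + 1) = (u 1 - v 1) * ∏ k ∈ Icc 1 n, a k := by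
  induction n with
  | zero => simp
  | succ n ih =>
    rw [hu (n + 1) (by omega), hv (n + 1) (by omega), prod_Icc_succ_top (by omega), ← mul_assoc,
      ← ih]
    ring

theorem garch11_same_innovations_coalesce_general
    {Ω : Type*} [MeasurableSpace Ω] (μ : Measure Ω)
    (ε : ℕ → Ω → ℝ) (α β : ℝ) (hα : 0 ≤ α) (hβ : 0 ≤ β)
    (hindep_iid : iIndepFun ε μ)
    (hident : ∀ i j, IdentDistrib (ε i) (ε j) μ μ)
    (hint : Integrable (fun x => Real.log (α * (ε 1 x) ^ 2 + β)) μ)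
    (hneg : ∫ x, Real.log (α * (ε 1 x) ^ 2 + β) ∂μ < 0)
    (ωc : ℝ) (σsq νsq : ℕ → Ω → ℝ)
    (hrecσ : ∀ n, 1 ≤ n → ∀ x, σsq (n + 1) x = ωc + σsq n x * (α * (ε n x) ^ 2 + β))
    (hrecν : ∀ n, 1 ≤ n → ∀ x, νsq (n + 1) x = ωc + νsq n x * (α * (ε n x) ^ 2 + β)) :
    (∀ᵐ x ∂μ, Tendsto (fun n => ∏ k ∈ Finset.Icc 1 n, (α * (ε k x) ^ 2 + β))
      atTop (nhds 0)) ∧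
    (∀ n, 1 ≤ n → ∀ x, |σsq (n + 1) x - νsq (n + 1) x|
      = |σsq 1 x - νsq 1 x| * ∏ k ∈ Finset.Icc 1 n, (α * (ε k x) ^ 2 + β)) ∧
    (∀ᵐ x ∂μ, Tendsto (fun n => |σsq (n + 1) x - νsq (n + 1) x|) atTop (nhds 0)) := by
  set a : ℕ → Ω → ℝ := fun k x => α * ε k x ^ 2 + β
  have ha : ∀ k x, 0 ≤ a k x := fun k x => by positivity
  have hφ : Measurable fun t : ℝ => α * t ^ 2 + β := by fun_prop
  have hprod : ∀ᵐ x ∂μ, Tendsto (fun n => ∏ k ∈ Icc 1 n, a k x) atTop (𝓝 0) := by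
    simp only [prod_Icc_one_eq_prod_range]
    exact ae_tendsto_prod_range_zero_of_integral_log_neg (fun i => a (i + 1)) (fun i => ha _)
      (fun i j hij => (hindep_iid.indepFun (by simpa using hij)).comp hφ hφ)
      (fun i => (hident (i + 1) 1).comp hφ) hint hneg
  have hdiff : ∀ n x,
      |σsq (n + 1) x - νsq (n + 1) x| = |σsq 1 x - νsq 1 x| * ∏ k ∈ Icc 1 n, a k x := by
    intro n x
    rw [sub_eq_mul_prod_of_affine_recurrence (u := (σsq · x)) (v := (νsq · x)) (a := (a · x))
      (fun n hn => hrecσ n hn x) (fun n hn => hrecν n hn x) n, abs_mul, abs_of_nonneg (prod_nonneg fun k _ => ha k x)]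
  refine ⟨hprod, fun n _ => hdiff n, ?_⟩
  filter_upwards [hprod] with x hx
  simpa only [← hdiff, mul_zero] using hx.const_mul |σsq 1 x - νsq 1 x|

/-- If `(ε_k)` is i.i.d. with `E[log(α ε₁² + β)] < 0`, then `∏_{k=1}^n (α ε_k² + β) → 0` a.s.;
consequently two GARCH(1,1) volatility processes driven by the same innovations satisfy
`|σ²_{n+1} − ν²_{n+1}| = |σ²_1 − ν²_1| ∏_{k=1}^n (α ε_k² + β) → 0` a.s. -/
theorem garch11_same_innovations_coalesce
    {Ω : Type*} [MeasurableSpace Ω] (μ : Measure Ω) [IsProbabilityMeasure μ]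
    (ε : ℕ → Ω → ℝ) (α β : ℝ) (hα : 0 ≤ α) (hβ : 0 ≤ β)
    (hmeas : ∀ k, Measurable (ε k))
    (hindep_iid : iIndepFun ε μ)
    (hident : ∀ i j, IdentDistrib (ε i) (ε j) μ μ)
    (hint : Integrable (fun x => Real.log (α * (ε 1 x) ^ 2 + β)) μ)
    (hneg : ∫ x, Real.log (α * (ε 1 x) ^ 2 + β) ∂μ < 0)
    (ωc : ℝ) (σsq νsq : ℕ → Ω → ℝ)
    (hrecσ : ∀ n, 1 ≤ n → ∀ x, σsq (n + 1) x = ωc + σsq n x * (α * (ε n x) ^ 2 + β))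
    (hrecν : ∀ n, 1 ≤ n → ∀ x, νsq (n + 1) x = ωc + νsq n x * (α * (ε n x) ^ 2 + β)) :
    (∀ᵐ x ∂μ, Tendsto (fun n => ∏ k ∈ Finset.Icc 1 n, (α * (ε k x) ^ 2 + β))
      atTop (nhds 0)) ∧
    (∀ n, 1 ≤ n → ∀ x, |σsq (n + 1) x - νsq (n + 1) x|
      = |σsq 1 x - νsq 1 x| * ∏ k ∈ Finset.Icc 1 n, (α * (ε k x) ^ 2 + β)) ∧
    (∀ᵐ x ∂μ, Tendsto (fun n => |σsq (n + 1) x - νsq (n + 1) x|) atTop (nhds 0)) :=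
  garch11_same_innovations_coalesce_general μ ε α β hα hβ hindep_iid hident hint hneg ωc σsq νsq
    hrecσ hrecν
end

section
/- Let r ≥ 1, let λ_1, …, λ_r ≥ 0 with ∑_{j=1}^r λ_j ≥ 1, and let ω > 0. Let (m_n)_{n≥1} be a sequence of positive reals satisfying m_i = ω + ∑_{j=1}^r λ_j m_{i−j} for all i > r. Then m_n → +∞ as n → ∞. -/
/-!
For `n > r`, every index `n - j` with `1 ≤ j ≤ r` lies in an earlier block of length `r`.
Since `∑ λ_j ≥ 1`, a nonnegative lower bound `c` on the previous block propagates to `ω + c`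
on the next one, so each block gains at least `ω` and `m n ≥ ω ⌊(n - 1) / r⌋ → ∞`.
-/

open Filter Finset

theorem mul_pred_div_le_of_le_add_sum {r : ℕ} (hr : 0 < r) {lam : ℕ → ℝ}
    (hlam : ∀ j, 0 ≤ lam j) (hsum : 1 ≤ ∑ j ∈ Icc 1 r, lam j) {ω : ℝ} (hω : 0 ≤ ω)
    {m : ℕ → ℝ} (hm : ∀ n ≤ r, 0 ≤ m n)
    (hrec : ∀ i, r < i → ω + ∑ j ∈ Icc 1 r, lam j * m (i - j) ≤ m i) (n : ℕ) :
    ω * ((n - 1) / r : ℕ) ≤ m n := by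
  induction n using Nat.strong_induction_on with
  | _ n ih =>
    rcases le_or_gt n r with hnr | hrn
    · simpa [Nat.div_eq_of_lt (show n - 1 < r by omega)] using hm n hnr
    set c := ω * ((n - 1 - r) / r : ℕ) with hc
    have hc_nonneg : 0 ≤ c := by positivity
    have hprev : ∀ j ∈ Icc 1 r, c ≤ m (n - j) := fun j hj => by
      rw [mem_Icc] at hj
      refine le_trans ?_ (ih (n - j) (by omega))
      rw [hc]
      gcongr ω * (?_ : ℝ)
      exact_mod_cast Nat.div_le_div_right (by omega)
    have hblock : (n - 1) / r = (n - 1 - r) / r + 1 := by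
      rw [← Nat.add_div_right _ hr]
      congr 1
      omega
    calc ω * ((n - 1) / r : ℕ) = ω + c := by rw [hblock, hc]; push_cast; ring
      _ ≤ ω + (∑ j ∈ Icc 1 r, lam j) * c := by
        gcongr
        exact le_mul_of_one_le_left hc_nonneg hsum
      _ = ω + ∑ j ∈ Icc 1 r, lam j * c := by rw [sum_mul]
      _ ≤ ω + ∑ j ∈ Icc 1 r, lam j * m (n - j) := by
        gcongr with j hj
        exacts [hlam j, hprev j hj]
      _ ≤ m n := hrec n hrn

/-- If `λ_1, …, λ_r ≥ 0` with `∑ λ_j ≥ 1` and `ω > 0`, then any positive sequence satisfying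
`m_i = ω + ∑_{j=1}^r λ_j m_{i−j}` for all `i > r` tends to `+∞`. -/
theorem garch_pq_mean_recursion_explodes
    (r : ℕ) (hr : 1 ≤ r) (lam : ℕ → ℝ) (hlam : ∀ j, 0 ≤ lam j)
    (hsum : 1 ≤ ∑ j ∈ Finset.Icc 1 r, lam j) (ω : ℝ) (hω : 0 < ω)
    (m : ℕ → ℝ) (hm : ∀ n, 0 < m n)
    (hrec : ∀ i, r < i → m i = ω + ∑ j ∈ Finset.Icc 1 r, lam j * m (i - j)) :
    Tendsto m atTop atTop := by
  have hbound := mul_pred_div_le_of_le_add_sum hr hlam hsum hω.le (fun n _ => (hm n).le)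
    (fun i hi => (hrec i hi).ge)
  have hblocks : Tendsto (fun n : ℕ => (n - 1) / r) atTop atTop :=
    (Nat.tendsto_div_const_atTop (by omega)).comp (tendsto_sub_atTop_nat 1)
  exact tendsto_atTop_mono hbound
    ((tendsto_natCast_atTop_atTop.comp hblocks).const_mul_atTop hω)
end

section
/- Let 0 < ν < 1. Then the moment generating function of GED(ν) does not exist for any t ≠ 0: for every t > 0 (and by symmetry every t < 0), the integral ∫_ℝ e^{tx} f_ν(x) dx diverges, i.e. the function x ↦ e^{tx} f_ν(x) is not integrable on ℝ. -/
open MeasureTheory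

/-- Scale parameter `λ = 2^{−1/ν} (Γ(1/ν)/Γ(3/ν))^{1/2}` of the generalized error
distribution `GED(ν)`. -/
noncomputable def gedScale (ν : ℝ) : ℝ :=
  (2 : ℝ) ^ (-(1 : ℝ) / ν) * Real.sqrt (Real.Gamma (1 / ν) / Real.Gamma (3 / ν))

/-- Density of the generalized error distribution `GED(ν)`:
`f_ν(x) = ν exp(−(1/2)|x/λ|^ν) / (λ 2^{1+1/ν} Γ(1/ν))`. -/
noncomputable def gedDensity (ν x : ℝ) : ℝ :=
  ν * Real.exp (-(1 / 2) * |x / gedScale ν| ^ ν) /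
    (gedScale ν * (2 : ℝ) ^ (1 + 1 / ν) * Real.Gamma (1 / ν))

/-!
For `ν < 1` the tail `exp(-(1/2)|x/λ|^ν)` of the density decays more slowly than any
exponential: `t x - a x^ν = x (t - a x^(ν-1)) → ∞`, so `e^{tx} f_ν(x) → ∞` as `x → ∞` when
`t > 0`, and a function bounded below by a positive constant near `+∞` is not integrable.
The case `t < 0` follows from `t > 0` since `f_ν` is even.
-/

open Filter

lemma not_integrable_of_eventually_le_atTop {f : ℝ → ℝ} {c : ℝ} (hc : 0 < c)
    (hf : ∀ᶠ x in atTop, c ≤ f x) : ¬ Integrable f volume := by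
  intro hI
  obtain ⟨A, hA⟩ := eventually_atTop.1 hf
  have hconst : IntegrableOn (fun _ : ℝ => c) (Set.Ici A) volume := by
    refine Integrable.mono' hI.integrableOn aestronglyMeasurable_const ?_
    filter_upwards [self_mem_ae_restrict measurableSet_Ici] with x hx
    rw [Real.norm_eq_abs, abs_of_pos hc]
    exact hA x hx
  simp [integrableOn_const_iff, hc.ne', Real.volume_Ici] at hconst

lemma tendsto_mul_sub_mul_rpow_atTop {ν t : ℝ} (hν : ν < 1) (ht : 0 < t) (a : ℝ) :
    Tendsto (fun x : ℝ => t * x - a * x ^ ν) atTop atTop := by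
  have hsmall : Tendsto (fun x : ℝ => t - a * x ^ (ν - 1)) atTop (nhds t) := by
    have := (tendsto_rpow_neg_atTop (y := 1 - ν) (by linarith)).const_mul a
    simpa using this.const_sub t
  refine (tendsto_id.atTop_mul_pos ht hsmall).congr' ?_
  filter_upwards [eventually_gt_atTop 0] with x hx
  rw [id, Real.rpow_sub_one hx.ne']
  field_simp

lemma gedScale_pos {ν : ℝ} (hν : 0 < ν) : 0 < gedScale ν :=
  mul_pos (by positivity) (Real.sqrt_pos.2 (div_pos (Real.Gamma_pos_of_pos (by positivity))
    (Real.Gamma_pos_of_pos (by positivity))))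

lemma gedDensity_zero_pos {ν : ℝ} (hν : 0 < ν) : 0 < gedDensity ν 0 := by
  have := gedScale_pos hν
  have := Real.Gamma_pos_of_pos (one_div_pos.2 hν)
  unfold gedDensity
  positivity

lemma gedDensity_eq_mul_exp {ν : ℝ} (hν : ν ≠ 0) (x : ℝ) :
    gedDensity ν x = gedDensity ν 0 * Real.exp (-(1 / 2) * |x / gedScale ν| ^ ν) := by
  simp only [gedDensity, zero_div, abs_zero, Real.zero_rpow hν, mul_zero, Real.exp_zero]
  ring

lemma gedDensity_neg (ν x : ℝ) : gedDensity ν (-x) = gedDensity ν x := by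
  simp only [gedDensity, neg_div, abs_neg]

lemma tendsto_exp_mul_gedDensity_atTop {ν t : ℝ} (hν0 : 0 < ν) (hν1 : ν < 1) (ht : 0 < t) :
    Tendsto (fun x => Real.exp (t * x) * gedDensity ν x) atTop atTop := by
  have hexp := Real.tendsto_exp_atTop.comp
    (tendsto_mul_sub_mul_rpow_atTop hν1 ht (1 / 2 / gedScale ν ^ ν))
  refine (hexp.const_mul_atTop (gedDensity_zero_pos hν0)).congr' ?_
  filter_upwards [eventually_gt_atTop 0] with x hx
  have hscale := gedScale_pos hν0
  rw [gedDensity_eq_mul_exp hν0.ne' x, abs_of_pos (div_pos hx hscale),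
    Real.div_rpow hx.le hscale.le, Function.comp_apply, mul_left_comm, ← Real.exp_add]
  congr 2
  ring

/-- For `0 < ν < 1` the moment generating function of `GED(ν)` does not exist at any
`t ≠ 0`: the function `x ↦ e^{tx} f_ν(x)` is not integrable on `ℝ`. -/
theorem ged_mgf_not_exists_of_shape_lt_one
    (ν : ℝ) (hν0 : 0 < ν) (hν1 : ν < 1) :
    ∀ t : ℝ, t ≠ 0 →
      ¬ Integrable (fun x => Real.exp (t * x) * gedDensity ν x) (volume) := by
  intro t ht hI
  wlog htpos : 0 < t generalizing t
  · refine this (-t) (neg_ne_zero.2 ht) ?_ (by grind)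
    simpa only [gedDensity_neg, mul_neg, neg_mul] using hI.comp_neg
  exact not_integrable_of_eventually_le_atTop one_pos
    ((tendsto_exp_mul_gedDensity_atTop hν0 hν1 htpos).eventually_ge_atTop 1) hI
end
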